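/- The principal Calkin space ⟨α⟩ generated by the sequence α = (1/log₂(n+1))_{n=1}^∞ is stable. -/

import Mathlib

open scoped BigOperators

noncomputable section

/-- The space of complex null sequences `c₀`. -/
def c0 : Set (ℕ → ℂ) := {α | Filter.Tendsto α Filter.atTop (nhds 0)}

/-- `rearrSum α n` is the supremum of `∑_{i ∈ F} |α i|` over finite sets `F ⊆ ℕ` with
`|F| = n`; for a null sequence it equals `α*₁ + ⋯ + α*ₙ` where `α*` is the decreasing
rearrangement of `(|α_n|)`. -/
def rearrSum (α : ℕ → ℂ) (n : ℕ) : ℝ :=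
  sSup ((fun F : Finset ℕ => ∑ i ∈ F, ‖α i‖) '' {F | F.card = n})

/-- The decreasing rearrangement of a null sequence, 0-indexed:
`rearr α n = α*_{n+1}`. -/
def rearr (α : ℕ → ℂ) (n : ℕ) : ℝ := rearrSum α (n + 1) - rearrSum α n

/-- A Calkin space: a linear subspace of `c₀` containing every null sequence whose
decreasing rearrangement is dominated termwise by that of one of its members. -/
def IsCalkinSpace (I : Set (ℕ → ℂ)) : Prop :=
  I ⊆ c0 ∧ (0 : ℕ → ℂ) ∈ I ∧
  (∀ α ∈ I, ∀ β ∈ I, α + β ∈ I) ∧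
  (∀ (c : ℂ), ∀ α ∈ I, c • α ∈ I) ∧
  (∀ α ∈ I, ∀ β ∈ c0, (∀ n, rearr β n ≤ rearr α n) → β ∈ I)

/-- `tensorSum α β n` is the supremum of `∑_{(i,j) ∈ F} |α i| |β j|` over finite
`F ⊆ ℕ × ℕ` with `|F| = n`; it equals `(α⊗β)₁ + ⋯ + (α⊗β)ₙ`. -/
def tensorSum (α β : ℕ → ℂ) (n : ℕ) : ℝ :=
  sSup ((fun F : Finset (ℕ × ℕ) => ∑ p ∈ F, ‖α p.1‖ * ‖β p.2‖) '' {F | F.card = n})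

/-- The tensor sequence `α⊗β`: the decreasing rearrangement of the double sequence
`(|α_m β_n|)_{m,n}`, 0-indexed: `tensorSeq α β n = (α⊗β)_{n+1}`. -/
def tensorSeq (α β : ℕ → ℂ) (n : ℕ) : ℝ := tensorSum α β (n + 1) - tensorSum α β n

/-- Embedding of real sequences into complex sequences. -/
def toC (f : ℕ → ℝ) : ℕ → ℂ := fun n => (f n : ℂ)

/-- The tensor product `𝔦⊗𝔧` of two Calkin spaces: the smallest Calkin space
containing `α⊗β` for all `α ∈ 𝔦`, `β ∈ 𝔧`. -/
def calkinTensor (I J : Set (ℕ → ℂ)) : Set (ℕ → ℂ) :=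
  ⋂₀ {K | IsCalkinSpace K ∧ ∀ α ∈ I, ∀ β ∈ J, toC (tensorSeq α β) ∈ K}

/-- A Calkin space `𝔦` is stable if `𝔦⊗𝔦 = 𝔦`. -/
def IsStableCalkin (I : Set (ℕ → ℂ)) : Prop := IsCalkinSpace I ∧ calkinTensor I I = I

/-- The principal Calkin space `⟨α⟩` generated by `α`: the smallest Calkin space
containing `α`. -/
def principalCalkin (α : ℕ → ℂ) : Set (ℕ → ℂ) := ⋂₀ {K | IsCalkinSpace K ∧ α ∈ K}

/-- `Kw ω α n = #{m : ω^{n+1} < α m ≤ ω^n}` (the sequence `α` being 0-indexed). -/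
def Kw (ω : ℝ) (α : ℕ → ℝ) (n : ℕ) : ℕ :=
  Set.ncard {m : ℕ | ω ^ (n + 1) < α m ∧ α m ≤ ω ^ n}

/-- `K̃ₙ = Σ_{i=0}^n Kᵢ`. -/
def Ktil (ω : ℝ) (α : ℕ → ℝ) (n : ℕ) : ℕ := ∑ i ∈ Finset.range (n + 1), Kw ω α i

/-- `Mₙ = Σ_{i+j=n} Kᵢ Kⱼ`. -/
def Mw (ω : ℝ) (α : ℕ → ℝ) (n : ℕ) : ℕ :=
  ∑ i ∈ Finset.range (n + 1), Kw ω α i * Kw ω α (n - i)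

/-- `M̃ₙ = Σ_{i=0}^n Mᵢ`. -/
def Mtil (ω : ℝ) (α : ℕ → ℝ) (n : ℕ) : ℕ := ∑ i ∈ Finset.range (n + 1), Mw ω α i

/-!
Write `a n = 1 / log₂ (n + 2)`. Since `a 0 + ⋯ + a n ≤ 5 (n + 1) a n`, the principal space `⟨a⟩`
consists of the null sequences `β` with `β*₁ + ⋯ + β*ₙ ≤ C (a 0 + ⋯ + a (n - 1))` for some `C`,
a description visibly closed under sums, scalar multiples and domination. Such a `β` has fewer
than `2 ^ (5 C / u)` entries of modulus `> u`. For `β, γ` with constant `C` and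
`L = log₂ (n + 2)`, a product `|β i γ j| > 20 C² / L` forces `|β i|, |γ j| > 20 C / L`, which
leaves fewer than `2 ^ (L / 4) = (n + 2) ^ (1 / 4)` candidates for each of `i` and `j`, hence at
most `n` such products; so `(β ⊗ γ)*_{n+1} ≤ 20 C² a n`. Conversely `a ≤ a ⊗ a` because `a 0 = 1`.
-/

open Filter Finset

section TopSum

variable {ι : Type*} {f g : ι → ℝ} {n : ℕ}

/-- `rearrSum β = topSum (‖β ·‖)` and `tensorSum β γ = topSum (fun p ↦ ‖β p.1‖ * ‖γ p.2‖)`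
hold by `rfl`. -/
def topSum (f : ι → ℝ) (n : ℕ) : ℝ :=
  sSup ((fun F : Finset ι => ∑ i ∈ F, f i) '' {F | F.card = n})

theorem topSum_le [Infinite ι] {M : ℝ} (h : ∀ F : Finset ι, F.card = n → ∑ i ∈ F, f i ≤ M) :
    topSum f n ≤ M := by
  obtain ⟨F₀, hF₀⟩ := Infinite.exists_subset_card_eq ι n
  exact csSup_le (Set.image_nonempty.2 ⟨F₀, hF₀⟩) (by rintro _ ⟨F, hF, rfl⟩; exact h F hF)

theorem sum_le_topSum (hf : BddAbove (Set.range f)) {F : Finset ι} (hF : F.card = n) :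
    ∑ i ∈ F, f i ≤ topSum f n := by
  obtain ⟨B, hB⟩ := hf
  refine le_csSup ⟨n • B, ?_⟩ ⟨F, hF, rfl⟩
  rintro _ ⟨G, rfl, rfl⟩
  exact G.sum_le_card_nsmul f B fun i _ => hB ⟨i, rfl⟩

theorem topSum_zero : topSum f 0 = 0 := by
  simp [topSum]

theorem topSum_mono [Infinite ι] (hg : BddAbove (Set.range g)) (hfg : f ≤ g) :
    topSum f n ≤ topSum g n :=
  topSum_le fun _ hF => (sum_le_sum fun i _ => hfg i).trans (sum_le_topSum hg hF)

theorem topSum_add_le [Infinite ι] (hf : BddAbove (Set.range f)) (hg : BddAbove (Set.range g)) :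
    topSum (f + g) n ≤ topSum f n + topSum g n :=
  topSum_le fun F hF => by
    simp only [Pi.add_apply, sum_add_distrib]
    exact add_le_add (sum_le_topSum hf hF) (sum_le_topSum hg hF)

theorem topSum_const_mul_le [Infinite ι] (hf : BddAbove (Set.range f)) {c : ℝ} (hc : 0 ≤ c) :
    topSum (fun i => c * f i) n ≤ c * topSum f n :=
  topSum_le fun F hF => by
    rw [← mul_sum]
    exact mul_le_mul_of_nonneg_left (sum_le_topSum hf hF) hc

theorem topSum_succ_sub_le [Infinite ι] (hf : BddAbove (Set.range f)) {t : ℝ}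
    (hfin : {i | t < f i}.Finite) (hcard : {i | t < f i}.ncard ≤ n) :
    topSum f (n + 1) - topSum f n ≤ t := by
  classical
  rw [sub_le_iff_le_add']
  refine topSum_le fun F hF => ?_
  obtain ⟨i, hiF, hi⟩ : ∃ i ∈ F, f i ≤ t := by
    by_contra! h
    have := (Set.ncard_le_ncard (s := (F : Set ι)) h hfin).trans hcard
    rw [Set.ncard_coe_finset] at this
    omega
  rw [← sum_erase_add F f hiF]
  exact add_le_add (sum_le_topSum hf (by simp [card_erase_of_mem hiF, hF])) hi

theorem le_topSum_succ_sub [Infinite ι] (hf : BddAbove (Set.range f)) {s : Finset ι}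
    (hs : s.card = n + 1) {v : ℝ} (hv : ∀ i ∈ s, v ≤ f i) :
    v ≤ topSum f (n + 1) - topSum f n := by
  classical
  rw [le_sub_comm]
  refine topSum_le fun F hF => ?_
  obtain ⟨i, his, hiF⟩ := exists_mem_notMem_of_card_lt_card (by omega : F.card < s.card)
  have := sum_le_topSum hf (F := insert i F) (by rw [card_insert_of_notMem hiF, hF])
  rw [sum_insert hiF] at this
  linarith [hv i his]

theorem topSum_succ_sub_nonneg [Infinite ι] (hf : BddAbove (Set.range f)) (hf0 : 0 ≤ f) :
    0 ≤ topSum f (n + 1) - topSum f n :=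
  have ⟨_, hs⟩ := Infinite.exists_subset_card_eq ι (n + 1)
  le_topSum_succ_sub hf hs fun i _ => hf0 i

/-- Averaging over the `n + 1` ways to drop one element of an `(n + 1)`-set. -/
theorem succ_mul_topSum_succ_sub_le [Infinite ι] (hf : BddAbove (Set.range f)) :
    (n + 1) * (topSum f (n + 1) - topSum f n) ≤ topSum f (n + 1) := by
  classical
  suffices n * topSum f (n + 1) ≤ (n + 1) * topSum f n by linarith
  rcases n.eq_zero_or_pos with rfl | hn
  · simp [topSum_zero]
  rw [← le_div_iff₀' (by positivity)]
  refine topSum_le fun F hF => ?_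
  rw [le_div_iff₀' (by positivity)]
  calc (n : ℝ) * ∑ i ∈ F, f i = ∑ j ∈ F, ∑ i ∈ F.erase j, f i := by
        rw [sum_congr rfl fun j hj => sum_erase_eq_sub hj, sum_sub_distrib, sum_const, hF]
        simp only [nsmul_eq_mul]
        push_cast
        ring
    _ ≤ ∑ _j ∈ F, topSum f n :=
        sum_le_sum fun j hj => sum_le_topSum hf (by simp [card_erase_of_mem hj, hF])
    _ = (n + 1) * topSum f n := by simp [hF]

end TopSum

theorem Finset.sum_le_sum_range_card_of_antitone {M : Type*} [AddCommMonoid M] [PartialOrder M]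
    [IsOrderedAddMonoid M] {f : ℕ → M} (hf : Antitone f) (F : Finset ℕ) :
    ∑ i ∈ F, f i ≤ ∑ i ∈ range F.card, f i := by
  induction F using Finset.induction_on_max with
  | empty => simp
  | insert a s has ih =>
    have ha : a ∉ s := fun h => lt_irrefl a (has a h)
    have hcard : s.card ≤ a := by
      simpa using card_le_card (fun x hx => mem_range.2 (has x hx) : s ⊆ range a)
    rw [sum_insert ha, card_insert_of_notMem ha, sum_range_succ, add_comm]
    exact add_le_add ih (hf hcard)

theorem topSum_eq_sum_range_of_antitone {f : ℕ → ℝ} (hf : Antitone f) (n : ℕ) :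
    topSum f n = ∑ i ∈ range n, f i :=
  le_antisymm (topSum_le fun F hF => hF ▸ F.sum_le_sum_range_card_of_antitone hf)
    (sum_le_topSum ⟨f 0, by rintro _ ⟨i, rfl⟩; exact hf i.zero_le⟩ (card_range n))

section NullSequences

variable {β γ : ℕ → ℂ} {n : ℕ}

theorem bddAbove_range_norm (hβ : β ∈ c0) : BddAbove (Set.range fun i => ‖β i‖) :=
  hβ.norm.bddAbove_range

theorem bddAbove_range_norm_mul_norm (hβ : β ∈ c0) (hγ : γ ∈ c0) :
    BddAbove (Set.range fun p : ℕ × ℕ => ‖β p.1‖ * ‖γ p.2‖) := by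
  obtain ⟨B, hB⟩ := bddAbove_range_norm hβ
  obtain ⟨B', hB'⟩ := bddAbove_range_norm hγ
  refine ⟨B * B', ?_⟩
  rintro _ ⟨p, rfl⟩
  exact mul_le_mul (hB ⟨p.1, rfl⟩) (hB' ⟨p.2, rfl⟩) (norm_nonneg _)
    ((norm_nonneg _).trans (hB ⟨0, rfl⟩))

theorem finite_setOf_lt_norm (hβ : β ∈ c0) {u : ℝ} (hu : 0 < u) : {i | u < ‖β i‖}.Finite := by
  have h : ∀ᶠ i in cofinite, ‖β i‖ < u := by
    rw [Nat.cofinite_eq_atTop]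
    exact hβ.norm.eventually (gt_mem_nhds (by simpa using hu))
  exact (eventually_cofinite.1 h).subset fun i hi => not_lt.2 (le_of_lt hi)

theorem toC_mem_c0 {f : ℕ → ℝ} (hf : Tendsto f atTop (nhds 0)) : toC f ∈ c0 :=
  (Complex.continuous_ofReal.tendsto 0).comp hf

theorem rearrSum_add_le (hβ : β ∈ c0) (hγ : γ ∈ c0) :
    rearrSum (β + γ) n ≤ rearrSum β n + rearrSum γ n :=
  (topSum_mono ((bddAbove_range_norm hβ).range_add (bddAbove_range_norm hγ))
    fun i => norm_add_le (β i) (γ i)).trans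
    (topSum_add_le (bddAbove_range_norm hβ) (bddAbove_range_norm hγ))

theorem rearrSum_smul_le (c : ℂ) (hβ : β ∈ c0) : rearrSum (c • β) n ≤ ‖c‖ * rearrSum β n := by
  change topSum (fun i => ‖(c • β) i‖) n ≤ _
  simp only [Pi.smul_apply, norm_smul]
  exact topSum_const_mul_le (bddAbove_range_norm hβ) (norm_nonneg c)

theorem rearrSum_eq_sum_rearr (β : ℕ → ℂ) (n : ℕ) :
    rearrSum β n = ∑ i ∈ range n, rearr β i := by
  simp only [rearr, sum_range_sub]
  rw [show rearrSum β 0 = 0 from topSum_zero, sub_zero]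

theorem tensorSeq_nonneg (hβ : β ∈ c0) (hγ : γ ∈ c0) (n : ℕ) : 0 ≤ tensorSeq β γ n :=
  topSum_succ_sub_nonneg (bddAbove_range_norm_mul_norm hβ hγ) fun p =>
    mul_nonneg (norm_nonneg (β p.1)) (norm_nonneg (γ p.2))

theorem norm_toC {f : ℕ → ℝ} (hf : 0 ≤ f) (i : ℕ) : ‖toC f i‖ = f i := by
  simp [toC, abs_of_nonneg (hf i)]

theorem rearrSum_toC {f : ℕ → ℝ} (hf : 0 ≤ f) (n : ℕ) : rearrSum (toC f) n = topSum f n :=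
  congrArg (topSum · n) (funext (norm_toC hf))

theorem rearr_toC_of_antitone {f : ℕ → ℝ} (hf : Antitone f) (hf0 : 0 ≤ f) (n : ℕ) :
    rearr (toC f) n = f n := by
  simp [rearr, rearrSum_toC hf0, topSum_eq_sum_range_of_antitone hf, sum_range_succ]

end NullSequences

section InvLog

open Real

def invLog (n : ℕ) : ℝ := 1 / logb 2 ((n : ℝ) + 2)

theorem one_le_logb_two_natCast_add_two (n : ℕ) : 1 ≤ logb 2 ((n : ℝ) + 2) := by
  rw [le_logb_iff_rpow_le one_lt_two (by positivity), rpow_one]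
  linarith [n.cast_nonneg (α := ℝ)]

theorem invLog_pos (n : ℕ) : 0 < invLog n :=
  one_div_pos.2 (zero_lt_one.trans_le (one_le_logb_two_natCast_add_two n))

theorem invLog_nonneg : 0 ≤ invLog := fun n => (invLog_pos n).le

theorem invLog_antitone : Antitone invLog := fun m n h =>
  one_div_le_one_div_of_le (zero_lt_one.trans_le (one_le_logb_two_natCast_add_two m))
    (logb_le_logb_of_le one_lt_two (by positivity) (by gcongr))

theorem invLog_zero : invLog 0 = 1 := by norm_num [invLog]

theorem invLog_le_one (n : ℕ) : invLog n ≤ 1 :=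
  invLog_zero ▸ invLog_antitone n.zero_le

theorem tendsto_invLog : Tendsto invLog atTop (nhds 0) := by
  have : Tendsto (fun n : ℕ => logb 2 ((n : ℝ) + 2)) atTop atTop :=
    (tendsto_logb_atTop one_lt_two).comp
      (tendsto_atTop_add_const_right _ 2 tendsto_natCast_atTop_atTop)
  exact this.inv_tendsto_atTop.congr fun n => (one_div _).symm

theorem invLog_sqrt_le (n : ℕ) : invLog (Nat.sqrt n) ≤ 2 * invLog n := by
  have hsq : (n : ℝ) + 2 ≤ ((Nat.sqrt n : ℝ) + 2) ^ 2 := by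
    have : n < (Nat.sqrt n + 1) * (Nat.sqrt n + 1) := Nat.lt_succ_sqrt n
    have : (n : ℝ) + 1 ≤ ((Nat.sqrt n : ℝ) + 1) * ((Nat.sqrt n : ℝ) + 1) := by exact_mod_cast this
    nlinarith
  have hlog : logb 2 ((n : ℝ) + 2) ≤ 2 * logb 2 ((Nat.sqrt n : ℝ) + 2) := by
    calc logb 2 ((n : ℝ) + 2) ≤ logb 2 (((Nat.sqrt n : ℝ) + 2) ^ 2) :=
          logb_le_logb_of_le one_lt_two (by positivity) hsq
      _ = 2 * logb 2 ((Nat.sqrt n : ℝ) + 2) := by simp [logb_pow]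
  have h1 := one_le_logb_two_natCast_add_two n
  have h2 := one_le_logb_two_natCast_add_two (Nat.sqrt n)
  rw [invLog, invLog, mul_one_div, div_le_div_iff₀ (by positivity) (by positivity)]
  linarith

theorem logb_two_le_three_mul_sqrt {x : ℝ} (hx : 0 ≤ x) : logb 2 x ≤ 3 * √x := by
  have hlog : log x ≤ 2 * √x := by
    simpa [sqrt_eq_rpow, div_eq_mul_inv, mul_comm] using
      log_le_rpow_div hx (by norm_num : (0 : ℝ) < 1 / 2)
  rw [logb, div_le_iff₀ (log_pos one_lt_two)]
  nlinarith [log_two_gt_d9, sqrt_nonneg x]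

theorem natSqrt_mul_logb_two_le (n : ℕ) :
    (Nat.sqrt n : ℝ) * logb 2 ((n : ℝ) + 2) ≤ 3 * ((n : ℝ) + 1) := by
  have hn : (0 : ℝ) ≤ n := n.cast_nonneg
  calc (Nat.sqrt n : ℝ) * logb 2 ((n : ℝ) + 2) ≤ √n * (3 * √((n : ℝ) + 2)) :=
        mul_le_mul (nat_sqrt_le_real_sqrt) (logb_two_le_three_mul_sqrt (by positivity))
          (one_le_logb_two_natCast_add_two n |>.trans' zero_le_one) (sqrt_nonneg _)
    _ = 3 * √(n * ((n : ℝ) + 2)) := by rw [sqrt_mul hn]; ring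
    _ ≤ 3 * ((n : ℝ) + 1) := by
        gcongr
        rw [sqrt_le_left (by positivity)]
        nlinarith

theorem sum_range_invLog_le (n : ℕ) :
    ∑ i ∈ range (n + 1), invLog i ≤ 5 * ((n : ℝ) + 1) * invLog n := by
  set k := Nat.sqrt n
  have head : ∑ i ∈ range k, invLog i ≤ k := by
    simpa using sum_le_card_nsmul (range k) invLog 1 fun i _ => invLog_le_one i
  have tail : ∑ i ∈ Ico k (n + 1), invLog i ≤ ((n : ℝ) + 1) * (2 * invLog n) := by
    refine (sum_le_card_nsmul _ _ _ fun i hi =>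
      (invLog_antitone (mem_Ico.1 hi).1).trans (invLog_sqrt_le n)).trans ?_
    rw [nsmul_eq_mul, Nat.card_Ico]
    gcongr
    · linarith [invLog_pos n]
    · exact_mod_cast Nat.sub_le _ _
  have hk : (k : ℝ) ≤ 3 * ((n : ℝ) + 1) * invLog n := by
    rw [invLog, mul_one_div, le_div_iff₀ (by linarith [one_le_logb_two_natCast_add_two n])]
    exact natSqrt_mul_logb_two_le n
  rw [← sum_range_add_sum_Ico _ ((Nat.sqrt_le_self n).trans n.le_succ)]
  linarith

end InvLog

section InvLogSpace

open Real Set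

variable {β γ : ℕ → ℂ} {C D : ℝ}

def InvLogDominated (C : ℝ) (β : ℕ → ℂ) : Prop :=
  ∀ n, rearrSum β n ≤ C * ∑ i ∈ range n, invLog i

def invLogSpace : Set (ℕ → ℂ) := {β | β ∈ c0 ∧ ∃ C, InvLogDominated C β}

theorem InvLogDominated.mono (h : InvLogDominated C β) (hCD : C ≤ D) : InvLogDominated D β :=
  fun n => (h n).trans (mul_le_mul_of_nonneg_right hCD (sum_nonneg fun i _ => invLog_nonneg i))

theorem InvLogDominated.norm_le (hβ : β ∈ c0) (h : InvLogDominated C β) (i : ℕ) : ‖β i‖ ≤ C := by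
  simpa [invLog_zero] using (sum_le_topSum (bddAbove_range_norm hβ) (card_singleton i)).trans (h 1)

theorem InvLogDominated.nonneg (hβ : β ∈ c0) (h : InvLogDominated C β) : 0 ≤ C :=
  (norm_nonneg _).trans (h.norm_le hβ 0)

theorem InvLogDominated.rearr_le (hβ : β ∈ c0) (h : InvLogDominated C β) (n : ℕ) :
    rearr β n ≤ 5 * C * invLog n := by
  have hn : (0 : ℝ) < n + 1 := by positivity
  refine le_of_mul_le_mul_left ?_ hn
  calc ((n : ℝ) + 1) * rearr β n ≤ rearrSum β (n + 1) :=
        succ_mul_topSum_succ_sub_le (bddAbove_range_norm hβ)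
    _ ≤ C * (5 * ((n : ℝ) + 1) * invLog n) :=
        (h (n + 1)).trans (mul_le_mul_of_nonneg_left (sum_range_invLog_le n) (h.nonneg hβ))
    _ = ((n : ℝ) + 1) * (5 * C * invLog n) := by ring

theorem InvLogDominated.ncard_add_one_le (hβ : β ∈ c0) (h : InvLogDominated C β) {u : ℝ}
    (hu : 0 < u) : ({i | u < ‖β i‖}.ncard : ℝ) + 1 ≤ 2 ^ (5 * C / u) := by
  have hfin := finite_setOf_lt_norm hβ hu
  cases hN : {i | u < ‖β i‖}.ncard with
  | zero => simpa using one_le_rpow one_le_two (div_nonneg (by linarith [h.nonneg hβ]) hu.le)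
  | succ M =>
    have hu_le : u ≤ 5 * C * invLog M := by
      refine (le_topSum_succ_sub (bddAbove_range_norm hβ) (s := hfin.toFinset) ?_
        fun i hi => (hfin.mem_toFinset.1 hi).le).trans (h.rearr_le hβ M)
      rw [← ncard_eq_toFinset_card _ hfin, hN]
    have hL : logb 2 ((M : ℝ) + 2) ≤ 5 * C / u := by
      rw [invLog, mul_one_div, le_div_iff₀ (by linarith [one_le_logb_two_natCast_add_two M])]
        at hu_le
      rw [le_div_iff₀ hu]
      linarith
    calc ((M + 1 : ℕ) : ℝ) + 1 = 2 ^ logb 2 ((M : ℝ) + 2) := by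
          rw [rpow_logb two_pos (by norm_num) (by positivity)]
          push_cast
          ring
      _ ≤ 2 ^ (5 * C / u) := rpow_le_rpow_of_exponent_le one_le_two hL

theorem mul_le_of_add_one_le_of_pow_four_eq {a b n : ℕ} {x : ℝ} (ha : (a : ℝ) + 1 ≤ x)
    (hb : (b : ℝ) + 1 ≤ x) (hx : x ^ 4 = n + 2) : a * b ≤ n := by
  rcases a.eq_zero_or_pos with rfl | ha0
  · simp
  have ha1 : (1 : ℝ) ≤ a := by exact_mod_cast ha0
  have hb0 : (0 : ℝ) ≤ b := b.cast_nonneg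
  have hab : (a : ℝ) * b ≤ (x - 1) * (x - 1) :=
    mul_le_mul (by linarith) (by linarith) hb0 (by linarith)
  have : (x - 1) * (x - 1) ≤ x ^ 4 - 2 := by nlinarith
  exact_mod_cast (by linarith : (a : ℝ) * b ≤ n)

theorem tensorSeq_le_of_invLogDominated (hβ : β ∈ c0) (hγ : γ ∈ c0) (hC : 0 < C)
    (hβC : InvLogDominated C β) (hγC : InvLogDominated C γ) (n : ℕ) :
    tensorSeq β γ n ≤ 20 * C ^ 2 * invLog n := by
  set L := logb 2 ((n : ℝ) + 2)
  have hL : 0 < L := zero_lt_one.trans_le (one_le_logb_two_natCast_add_two n)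
  set s := 20 * C / L
  have hs : 0 < s := by positivity
  have hexp : 5 * C / s = L / 4 := by
    simp only [s]
    field_simp
    ring
  have hsub : {p : ℕ × ℕ | C * s < ‖β p.1‖ * ‖γ p.2‖} ⊆ {i | s < ‖β i‖} ×ˢ {j | s < ‖γ j‖} := by
    rintro ⟨i, j⟩ hp
    change C * s < ‖β i‖ * ‖γ j‖ at hp
    change s < ‖β i‖ ∧ s < ‖γ j‖
    constructor <;> by_contra! hle
    · nlinarith [mul_le_mul hle (hγC.norm_le hγ j) (norm_nonneg _) hs.le]
    · nlinarith [mul_le_mul (hβC.norm_le hβ i) hle (norm_nonneg _) hC.le]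
  have hfin := (finite_setOf_lt_norm hβ hs).prod (finite_setOf_lt_norm hγ hs)
  have hcard : {p : ℕ × ℕ | C * s < ‖β p.1‖ * ‖γ p.2‖}.ncard ≤ n := by
    refine (ncard_le_ncard hsub hfin).trans ?_
    rw [ncard_prod]
    refine mul_le_of_add_one_le_of_pow_four_eq (x := 2 ^ (L / 4))
      (hexp ▸ hβC.ncard_add_one_le hβ hs) (hexp ▸ hγC.ncard_add_one_le hγ hs) ?_
    rw [← rpow_natCast, ← rpow_mul zero_le_two, Nat.cast_ofNat, div_mul_cancel₀ _ four_ne_zero,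
      rpow_logb two_pos (by norm_num) (by positivity)]
  calc tensorSeq β γ n ≤ C * s :=
        topSum_succ_sub_le (bddAbove_range_norm_mul_norm hβ hγ) (hfin.subset hsub) hcard
    _ = 20 * C ^ 2 * invLog n := by simp only [s, invLog]; ring

theorem toC_mem_invLogSpace {f : ℕ → ℝ} (hf0 : 0 ≤ f) (hf : ∀ n, f n ≤ D * invLog n) :
    toC f ∈ invLogSpace := by
  have hD : 0 ≤ D := by simpa [invLog_zero] using (hf0 0).trans (hf 0)
  refine ⟨toC_mem_c0 (squeeze_zero hf0 hf (by simpa using tendsto_invLog.const_mul D)), D,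
    fun n => ?_⟩
  rw [rearrSum_toC hf0]
  refine topSum_le fun F hF => ?_
  calc ∑ i ∈ F, f i ≤ ∑ i ∈ F, D * invLog i := sum_le_sum fun i _ => hf i
    _ = D * ∑ i ∈ F, invLog i := (mul_sum _ _ _).symm
    _ ≤ D * ∑ i ∈ range n, invLog i :=
        mul_le_mul_of_nonneg_left (hF ▸ F.sum_le_sum_range_card_of_antitone invLog_antitone) hD

theorem toC_invLog_mem : toC invLog ∈ invLogSpace :=
  toC_mem_invLogSpace invLog_nonneg (D := 1) fun _ => (one_mul _).ge

theorem toC_tensorSeq_mem (hβ : β ∈ invLogSpace) (hγ : γ ∈ invLogSpace) :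
    toC (tensorSeq β γ) ∈ invLogSpace := by
  obtain ⟨hβ, Cβ, hCβ⟩ := hβ
  obtain ⟨hγ, Cγ, hCγ⟩ := hγ
  have hC : 0 < max (max Cβ Cγ) 1 := lt_max_of_lt_right one_pos
  exact toC_mem_invLogSpace (tensorSeq_nonneg hβ hγ) (tensorSeq_le_of_invLogDominated hβ hγ hC
    (hCβ.mono ((le_max_left _ _).trans (le_max_left _ _)))
    (hCγ.mono ((le_max_right _ _).trans (le_max_left _ _))))

theorem isCalkinSpace_invLogSpace : IsCalkinSpace invLogSpace := by
  refine ⟨fun β hβ => hβ.1, ⟨tendsto_const_nhds, 0, fun n => ?_⟩, ?_, ?_, ?_⟩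
  · rw [zero_mul]
    exact topSum_le fun F _ => by simp
  · rintro β ⟨hβ, Cβ, hCβ⟩ γ ⟨hγ, Cγ, hCγ⟩
    refine ⟨by have := hβ.add hγ; rwa [add_zero] at this, Cβ + Cγ, fun n => ?_⟩
    calc rearrSum (β + γ) n ≤ rearrSum β n + rearrSum γ n := rearrSum_add_le hβ hγ
      _ ≤ Cβ * ∑ i ∈ range n, invLog i + Cγ * ∑ i ∈ range n, invLog i :=
          add_le_add (hCβ n) (hCγ n)
      _ = (Cβ + Cγ) * ∑ i ∈ range n, invLog i := (add_mul _ _ _).symm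
  · rintro c β ⟨hβ, C, hC⟩
    refine ⟨by have := hβ.const_smul c; rwa [smul_zero] at this, ‖c‖ * C, fun n => ?_⟩
    calc rearrSum (c • β) n ≤ ‖c‖ * rearrSum β n := rearrSum_smul_le c hβ
      _ ≤ ‖c‖ * (C * ∑ i ∈ range n, invLog i) := mul_le_mul_of_nonneg_left (hC n) (norm_nonneg c)
      _ = ‖c‖ * C * ∑ i ∈ range n, invLog i := (mul_assoc _ _ _).symm
  · rintro β ⟨-, C, hC⟩ γ hγ hdom
    refine ⟨hγ, C, fun n => ?_⟩
    calc rearrSum γ n = ∑ i ∈ range n, rearr γ i := rearrSum_eq_sum_rearr γ n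
      _ ≤ ∑ i ∈ range n, rearr β i := sum_le_sum fun i _ => hdom i
      _ = rearrSum β n := (rearrSum_eq_sum_rearr β n).symm
      _ ≤ C * ∑ i ∈ range n, invLog i := hC n

theorem invLogSpace_subset {K : Set (ℕ → ℂ)} (hK : IsCalkinSpace K) (hα : toC invLog ∈ K) :
    invLogSpace ⊆ K := by
  rintro β ⟨hβ, C, hC⟩
  have hC0 := hC.nonneg hβ
  have hmul : toC (fun n => 5 * C * invLog n) ∈ K := by
    have : toC (fun n => 5 * C * invLog n) = ((5 * C : ℝ) : ℂ) • toC invLog :=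
      funext fun n => by simp [toC]
    exact this ▸ hK.2.2.2.1 _ _ hα
  refine hK.2.2.2.2 _ hmul β hβ fun n => ?_
  rw [rearr_toC_of_antitone (invLog_antitone.const_mul (by positivity))
    fun n => mul_nonneg (by positivity) (invLog_nonneg n)]
  exact hC.rearr_le hβ n

theorem principalCalkin_toC_invLog : principalCalkin (toC invLog) = invLogSpace :=
  Subset.antisymm (sInter_subset_of_mem ⟨isCalkinSpace_invLogSpace, toC_invLog_mem⟩)
    (subset_sInter fun _ ⟨hK, hα⟩ => invLogSpace_subset hK hα)

theorem rearr_toC_invLog_le_rearr_tensorSeq (n : ℕ) :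
    rearr (toC invLog) n ≤ rearr (toC (tensorSeq (toC invLog) (toC invLog))) n := by
  rw [rearr_toC_of_antitone invLog_antitone invLog_nonneg]
  have hα : toC invLog ∈ c0 := toC_invLog_mem.1
  have hcol : ∀ i, invLog i ≤ tensorSeq (toC invLog) (toC invLog) i := fun i =>
    le_topSum_succ_sub (bddAbove_range_norm_mul_norm hα hα)
      (s := (range (i + 1)).map (.sectL ℕ 0)) (by simp)
      fun p hp => by
        obtain ⟨j, hj, rfl⟩ := mem_map.1 hp
        simpa [norm_toC invLog_nonneg, invLog_zero] using
          invLog_antitone (Nat.lt_succ_iff.1 (mem_range.1 hj))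
  have hδ := tensorSeq_nonneg hα hα
  refine le_topSum_succ_sub (bddAbove_range_norm (toC_tensorSeq_mem toC_invLog_mem
    toC_invLog_mem).1) (card_range (n + 1)) fun i hi => ?_
  rw [norm_toC hδ]
  exact (invLog_antitone (Nat.lt_succ_iff.1 (mem_range.1 hi))).trans (hcol i)

end InvLogSpace

/-- The principal Calkin space generated by the sequence
`(1/log₂(n+1))_{n=1}^∞` is stable. -/
theorem principal_log_stable :
    IsStableCalkin (principalCalkin (toC fun n => 1 / Real.logb 2 ((n : ℝ) + 2))) := by
  change IsStableCalkin (principalCalkin (toC invLog))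
  rw [principalCalkin_toC_invLog]
  refine ⟨isCalkinSpace_invLogSpace, Set.Subset.antisymm ?_ ?_⟩
  · exact Set.sInter_subset_of_mem
      ⟨isCalkinSpace_invLogSpace, fun β hβ γ hγ => toC_tensorSeq_mem hβ hγ⟩
  · refine Set.subset_sInter fun K ⟨hK, hKtensor⟩ => invLogSpace_subset hK ?_
    have hδK := hKtensor _ toC_invLog_mem _ toC_invLog_mem
    exact hK.2.2.2.2 _ hδK _ toC_invLog_mem.1 rearr_toC_invLog_le_rearr_tensorSeq
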